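/- Let T be a tree (a set of finite sequences of natural numbers containing the empty sequence and closed under initial segments), and let G(T) be the abelian group generated by the nodes of T subject to the relations that the root equals 0 and, for every nonroot node x, p·x equals the immediate predecessor of x in T (formally, G(T) is the quotient of the free abelian group on T by the subgroup generated by the root and all elements p·x − pred(x) for nonroot nodes x). Then G(T) is an abelian p-group, and G(T) is reduced if and only if T has no infinite path. -/

import Mathlib

open Ordinal

/-- Scalar multiplication by `p` as an additive group homomorphism. -/
def pHom (p : ℕ) (G : Type*) [AddCommGroup G] : G →+ G :=
  AddMonoidHom.mk' (fun x => p • x) (fun a b => smul_add p a b)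

@[simp] lemma pHom_apply (p : ℕ) {G : Type*} [AddCommGroup G] (x : G) :
    pHom p G x = p • x := rfl

/-- The Ulm subgroups `G_β`: `G_0 = G`, `G_{β+1} = pG_β`, and intersections at limits. -/
noncomputable def ulmSub (p : ℕ) (G : Type*) [AddCommGroup G] (β : Ordinal.{0}) :
    AddSubgroup G :=
  Ordinal.limitRecOn β ⊤ (fun _ H => AddSubgroup.map (pHom p G) H)
    (fun o _ ih => ⨅ (γ : Ordinal.{0}) (h : γ < o), ih γ h)

lemma ulmSub_succ (p : ℕ) (G : Type*) [AddCommGroup G] (β : Ordinal.{0}) :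
    ulmSub p G (β + 1) = AddSubgroup.map (pHom p G) (ulmSub p G β) := by
  unfold ulmSub
  rw [Ordinal.add_one_eq_succ, Ordinal.limitRecOn_succ]

lemma ulmSub_succ_le (p : ℕ) (G : Type*) [AddCommGroup G] (β : Ordinal.{0}) :
    ulmSub p G (β + 1) ≤ ulmSub p G β := by
  rw [ulmSub_succ]
  rintro x ⟨y, hy, rfl⟩
  simpa using (ulmSub p G β).nsmul_mem hy p

/-- An abelian `p`-group: every element is killed by some power of `p`. -/
def IsAbelianPGroup (p : ℕ) (G : Type*) [AddCommGroup G] : Prop :=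
  ∀ x : G, ∃ n : ℕ, p ^ n • x = 0

/-- The length `λ(G)`: the least ordinal `β` with `G_β = G_{β+1}`. -/
noncomputable def ulmLength (p : ℕ) (G : Type*) [AddCommGroup G] : Ordinal.{0} :=
  sInf {β : Ordinal.{0} | ulmSub p G β = ulmSub p G (β + 1)}

/-- `G` is reduced if `G_{λ(G)} = {0}`. -/
def IsReducedPGroup (p : ℕ) (G : Type*) [AddCommGroup G] : Prop :=
  ulmSub p G (ulmLength p G) = ⊥

/-- `P_β(G) = {x ∈ G_β : px = 0}`. -/
noncomputable def ulmP (p : ℕ) (G : Type*) [AddCommGroup G] (β : Ordinal.{0}) : AddSubgroup G :=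
  (pHom p G).ker ⊓ ulmSub p G β

/-- The quotient `P_β(G)/P_{β+1}(G)` (as a quotient of `P_β(G)` by the subgroup
corresponding to `P_{β+1}(G)`). -/
noncomputable def ulmQuot (p : ℕ) (G : Type*) [AddCommGroup G] (β : Ordinal.{0}) :=
  (ulmP p G β) ⧸ ((ulmP p G (β + 1)).addSubgroupOf (ulmP p G β))

noncomputable instance (p : ℕ) (G : Type*) [AddCommGroup G] (β : Ordinal.{0}) :
    AddCommGroup (ulmQuot p G β) :=
  inferInstanceAs (AddCommGroup ((ulmP p G β) ⧸ ((ulmP p G (β + 1)).addSubgroupOf (ulmP p G β))))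

noncomputable instance (p : ℕ) (G : Type*) [AddCommGroup G] (β : Ordinal.{0}) :
    Module (ZMod p) (ulmQuot p G β) :=
  QuotientAddGroup.zmodModule (by
    intro x
    simp only [AddSubgroup.mem_addSubgroupOf]
    have hx : ((p • x : ulmP p G β) : G) = 0 := by
      have : (x : G) ∈ (pHom p G).ker := x.2.1
      simp only [AddMonoidHom.mem_ker, pHom_apply] at this
      simpa using this
    rw [hx]
    exact (ulmP p G (β + 1)).zero_mem)

/-- The Ulm invariant `u_β(G)`: the dimension of `P_β(G)/P_{β+1}(G)` over `ℤ/pℤ`. -/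
noncomputable def ulmInvariant (p : ℕ) (G : Type*) [AddCommGroup G] (β : Ordinal.{0}) :
    Cardinal :=
  Module.rank (ZMod p) (ulmQuot p G β)

open Classical in
/-- The height of `x`: the unique ordinal `β` with `x ∈ G_β \ G_{β+1}` if it exists, and `∞`
(= `⊤`) otherwise. -/
noncomputable def height (p : ℕ) {G : Type*} [AddCommGroup G] (x : G) : WithTop Ordinal.{0} :=
  if ∃ β : Ordinal.{0}, x ∈ ulmSub p G β ∧ x ∉ ulmSub p G (β + 1) then
    ((sInf {β : Ordinal.{0} | x ∈ ulmSub p G β ∧ x ∉ ulmSub p G (β + 1)} : Ordinal.{0}) :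
      WithTop Ordinal.{0})
  else ⊤

/-- `d` is proper with respect to `S` if `h(d) ≥ h(d+s)` for every `s ∈ S`. -/
def ProperWRT (p : ℕ) {G : Type*} [AddCommGroup G] (S : AddSubgroup G) (d : G) : Prop :=
  ∀ s ∈ S, height p (d + s) ≤ height p d

/-- The relations defining `G(T)`: the root is `0`, and `p·x = pred(x)` for nonroot nodes. -/
def treeRelSet (p : ℕ) (T : Set (List ℕ)) : Set (FreeAbelianGroup T) :=
  {z | (∃ h : ([] : List ℕ) ∈ T, z = FreeAbelianGroup.of (⟨[], h⟩ : T)) ∨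
    ∃ (l : T) (h : (l : List ℕ).dropLast ∈ T), (l : List ℕ) ≠ [] ∧
      z = p • FreeAbelianGroup.of l -
          FreeAbelianGroup.of (⟨(l : List ℕ).dropLast, h⟩ : T)}

/-- `G(T)`: the quotient of the free abelian group on `T` by the subgroup generated by the
root and the elements `p·x − pred(x)` for nonroot nodes `x`. -/
def treeGroup (p : ℕ) (T : Set (List ℕ)) : Type :=
  FreeAbelianGroup T ⧸ AddSubgroup.closure (treeRelSet p T)

instance (p : ℕ) (T : Set (List ℕ)) : AddCommGroup (treeGroup p T) :=
  inferInstanceAs (AddCommGroup (FreeAbelianGroup T ⧸ AddSubgroup.closure (treeRelSet p T)))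

/-!
The nodes generate `G(T)` and `p ^ |x| • x = 0`, so `G(T)` is a `p`-group. Every element has a
unique expansion `∑ c_x x` with digits `0 ≤ c_x < p` vanishing at the root: existence by carrying
overflowing digits towards the root; uniqueness by evaluating, at the longest node `x` where two
expansions differ, the character `G(T) → ℚ/ℤ` sending `z` to `p ^ (|x| - |z| - 1)` if `x` is a
prefix of `z` and to `0` otherwise.

An infinite path gives nodes `x_0, x_1, …` with `p • x_{n+1} = x_n`, so they all lie in every
`G_β`, while `x_1 ≠ 0`. Conversely, if there is no infinite path then the child relation is
well founded, and `G_β` lies in the subgroup generated by the nodes of rank at least `β`; at limit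
stages this uses uniqueness of expansions. Hence `G_β = 0` once `β` exceeds every rank.
-/

open Finsupp

section Ulm

variable {p : ℕ} {G : Type*} [AddCommGroup G]

lemma ulmSub_zero : ulmSub p G 0 = ⊤ := by
  unfold ulmSub
  rw [Ordinal.limitRecOn_zero]

lemma ulmSub_limit {β : Ordinal.{0}} (hβ : Order.IsSuccLimit β) :
    ulmSub p G β = ⨅ (γ : Ordinal.{0}) (_ : γ < β), ulmSub p G γ := by
  unfold ulmSub
  rw [Ordinal.limitRecOn_limit _ _ _ _ hβ]

lemma subset_ulmSub {S : Set G} (hS : ∀ x ∈ S, ∃ y ∈ S, p • y = x) (β : Ordinal.{0}) :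
    S ⊆ ulmSub p G β := by
  induction β using Ordinal.limitRecOn with
  | zero => simp [ulmSub_zero]
  | add_one β ih =>
    intro x hx
    obtain ⟨y, hy, rfl⟩ := hS x hx
    rw [ulmSub_succ]
    exact ⟨y, ih hy, rfl⟩
  | limit β hβ ih =>
    intro x hx
    rw [ulmSub_limit hβ]
    exact AddSubgroup.mem_iInf.mpr fun γ => AddSubgroup.mem_iInf.mpr fun hγ => ih γ hγ hx

lemma ulmSub_ulmLength_le {β : Ordinal.{0}} (hβ : ulmSub p G β = ulmSub p G (β + 1))
    (γ : Ordinal.{0}) : ulmSub p G (ulmLength p G) ≤ ulmSub p G γ := by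
  have hstable : ulmSub p G (ulmLength p G) = ulmSub p G (ulmLength p G + 1) :=
    csInf_mem (s := {β | ulmSub p G β = ulmSub p G (β + 1)}) ⟨β, hβ⟩
  refine subset_ulmSub (fun x hx => ?_) γ
  rw [SetLike.mem_coe, hstable, ulmSub_succ] at hx
  obtain ⟨y, hy, rfl⟩ := hx
  exact ⟨y, hy, rfl⟩

lemma isReducedPGroup_of_ulmSub_eq_bot {β : Ordinal.{0}} (hβ : ulmSub p G β = ⊥) :
    IsReducedPGroup p G :=
  have hstable : ulmSub p G β = ulmSub p G (β + 1) :=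
    hβ.trans (le_bot_iff.mp (hβ ▸ ulmSub_succ_le p G β)).symm
  le_bot_iff.mp (hβ ▸ ulmSub_ulmLength_le hstable β)

lemma IsReducedPGroup.eq_zero_of_forall_mem_exists_nsmul_eq (hG : IsReducedPGroup p G)
    {S : Set G} (hS : ∀ x ∈ S, ∃ y ∈ S, p • y = x) {x : G} (hx : x ∈ S) : x = 0 := by
  have := subset_ulmSub hS (ulmLength p G) hx
  rwa [hG, SetLike.mem_coe, AddSubgroup.mem_bot] at this

end Ulm

lemma Finsupp.update_mem_supported {α M R : Type*} [Semiring R] [AddCommMonoid M] [Module R M]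
    {s : Set α} {c : α →₀ M} (hc : c ∈ supported M R s) {a : α} (ha : a ∈ s) (b : M) :
    c.update a b ∈ supported M R s := by
  classical
  rw [mem_supported'] at hc ⊢
  intro x hx
  rw [update_apply, if_neg (fun h : x = a => hx (h ▸ ha)), hc x hx]

lemma Finsupp.linearCombination_update_add {α M : Type*} (R : Type*) [Semiring R]
    [AddCommMonoid M] [Module R M] (v : α → M) (c : α →₀ R) (a : α) (b : R) :
    linearCombination R v (c.update a b) + c a • v a = linearCombination R v c + b • v a := by
  simp only [linearCombination_apply]
  exact sum_update_add _ _ _ _ (fun _ => zero_smul _ _) (fun _ _ _ => add_smul _ _ _)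

lemma List.IsPrefix.prefix_dropLast {α : Type*} {l₁ l₂ : List α} (h : l₁ <+: l₂) (hne : l₁ ≠ l₂) :
    l₁ <+: l₂.dropLast := by
  have hlt : l₁.length < l₂.length := h.length_le.lt_of_ne (mt h.eq_of_length hne)
  rw [List.dropLast_eq_take, List.prefix_take_iff]
  exact ⟨h, by omega⟩

def IsPrefixClosed (T : Set (List ℕ)) : Prop :=
  ∀ l ∈ T, ∀ l' : List ℕ, l' <+: l → l' ∈ T

def parent {T : Set (List ℕ)} (hT : IsPrefixClosed T) (x : T) : T :=
  ⟨x.1.dropLast, hT _ x.2 _ x.1.dropLast_prefix⟩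

def IsChild (T : Set (List ℕ)) (c y : T) : Prop :=
  c.1 ≠ [] ∧ c.1.dropLast = y.1

section Paths

variable {T : Set (List ℕ)} (hT : IsPrefixClosed T)
include hT

lemma acc_isChild_of_forall_nil (h : ∀ y : T, y.1 = [] → Acc (IsChild T) y) (x : T) :
    Acc (IsChild T) x := by
  obtain ⟨n, hn⟩ : ∃ n, x.1.length = n := ⟨_, rfl⟩
  induction n generalizing x with
  | zero => exact h x (List.length_eq_zero_iff.mp hn)
  | succ n ih =>
    have hx : x.1 ≠ [] := by rintro h; simp [h] at hn
    exact (ih (parent hT x) (by simp [parent, hn])).inv ⟨hx, rfl⟩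

lemma exists_path_of_not_acc {x : T} (hx : ¬ Acc (IsChild T) x) :
    ∃ f : ℕ → ℕ, ∀ n, (List.range n).map f ∈ T := by
  -- the root is not accessible either, and a chain of non-accessible children from it is a path
  have hroot : ¬ Acc (IsChild T) ⟨[], hT _ x.2 _ List.nil_prefix⟩ := fun h =>
    hx <| acc_isChild_of_forall_nil hT (fun y hy => by obtain ⟨_, _⟩ := y; subst hy; exact h) x
  choose next hnext using
    fun y : {y : T // ¬ Acc (IsChild T) y} => exists_not_acc_lt_of_not_acc y.2
  let node : ℕ → {y : T // ¬ Acc (IsChild T) y} :=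
    fun n => (fun y => ⟨next y, (hnext y).1⟩)^[n] ⟨_, hroot⟩
  have hchild (n : ℕ) : IsChild T (node (n + 1)).1 (node n).1 := by
    simp only [node, Function.iterate_succ_apply']
    exact (hnext _).2
  set f : ℕ → ℕ := fun n => (node (n + 1)).1.1.getLast (hchild n).1
  have hf (n : ℕ) : (List.range n).map f = (node n).1.1 := by
    induction n with
    | zero => rfl
    | succ n ih =>
      rw [List.range_succ, List.map_append, ih, List.map_singleton, ← (hchild n).2,
        List.dropLast_append_getLast]
  exact ⟨f, fun n => hf n ▸ (node n).1.2⟩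

lemma wellFounded_isChild (h : ¬ ∃ f : ℕ → ℕ, ∀ n, (List.range n).map f ∈ T) :
    WellFounded (IsChild T) :=
  ⟨fun _ => by_contra fun hx => h (exists_path_of_not_acc hT hx)⟩

end Paths

namespace treeGroup

variable {p : ℕ} {T : Set (List ℕ)}

def mk (p : ℕ) (T : Set (List ℕ)) : FreeAbelianGroup T →+ treeGroup p T :=
  QuotientAddGroup.mk' _

def of (p : ℕ) (x : T) : treeGroup p T :=
  mk p T (FreeAbelianGroup.of x)

lemma of_eq_zero {x : T} (hx : x.1 = []) : of p x = 0 := by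
  obtain ⟨_, hmem⟩ := x
  subst hx
  exact (QuotientAddGroup.eq_zero_iff _).mpr (AddSubgroup.subset_closure (Or.inl ⟨hmem, rfl⟩))

lemma nsmul_of {z w : T} (hw : w.1 = z.1.dropLast) : p • of p z = of p w := by
  by_cases hz : z.1 = []
  · rw [of_eq_zero hz, of_eq_zero (by rw [hw, hz, List.dropLast_nil]), smul_zero]
  obtain ⟨_, hmem⟩ := w
  subst hw
  rw [of, of, ← map_nsmul]
  refine QuotientAddGroup.eq_iff_sub_mem.mpr ?_
  exact AddSubgroup.subset_closure (Or.inr ⟨z, hmem, hz, rfl⟩)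

def lift {A : Type*} [AddCommGroup A] (φ : T → A) (hroot : ∀ x : T, x.1 = [] → φ x = 0)
    (hrel : ∀ z w : T, z.1 ≠ [] → w.1 = z.1.dropLast → p • φ z = φ w) :
    treeGroup p T →+ A :=
  QuotientAddGroup.lift _ (FreeAbelianGroup.lift φ) <| (AddSubgroup.closure_le _).mpr <| by
    rintro _ (⟨h, rfl⟩ | ⟨z, h, hz, rfl⟩)
    · simp [hroot ⟨[], h⟩ rfl]
    · simp [hrel z ⟨_, h⟩ hz rfl]

@[simp] lemma lift_of {A : Type*} [AddCommGroup A] (φ : T → A)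
    (hroot : ∀ x : T, x.1 = [] → φ x = 0)
    (hrel : ∀ z w : T, z.1 ≠ [] → w.1 = z.1.dropLast → p • φ z = φ w) (x : T) :
    lift (p := p) φ hroot hrel (of p x) = φ x :=
  FreeAbelianGroup.lift_apply_of φ x

lemma mem_closure_range_of (g : treeGroup p T) : g ∈ AddSubgroup.closure (Set.range (of p)) := by
  obtain ⟨a, rfl⟩ := QuotientAddGroup.mk'_surjective _ g
  induction a using FreeAbelianGroup.induction_on with
  | zero => exact zero_mem _
  | of x => exact AddSubgroup.subset_closure ⟨x, rfl⟩
  | neg a h => rw [map_neg]; exact neg_mem h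
  | add a b ha hb => rw [map_add]; exact add_mem ha hb

lemma pow_length_nsmul_of (hT : IsPrefixClosed T) (x : T) : p ^ x.1.length • of p x = 0 := by
  obtain ⟨n, hn⟩ : ∃ n, x.1.length = n := ⟨_, rfl⟩
  induction n generalizing x with
  | zero => rw [of_eq_zero (List.length_eq_zero_iff.mp hn), smul_zero]
  | succ n ih =>
    have hlen : (parent hT x).1.length = n := by simp [parent, hn]
    rw [hn, pow_succ, mul_smul, nsmul_of (w := parent hT x) rfl, ← hlen]
    exact ih _ hlen

theorem isAbelianPGroup (hT : IsPrefixClosed T) : IsAbelianPGroup p (treeGroup p T) := by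
  intro g
  induction mem_closure_range_of g using AddSubgroup.closure_induction with
  | mem _ hg =>
    obtain ⟨x, rfl⟩ := hg
    exact ⟨_, pow_length_nsmul_of hT x⟩
  | zero => exact ⟨0, smul_zero _⟩
  | add g h _ _ hg hh =>
    obtain ⟨m, hm⟩ := hg
    obtain ⟨n, hn⟩ := hh
    refine ⟨m + n, ?_⟩
    rw [smul_add, pow_add, mul_smul _ _ h, hn, smul_zero, add_zero, mul_comm, mul_smul, hm,
      smul_zero]
  | neg g _ hg =>
    obtain ⟨n, hn⟩ := hg
    exact ⟨n, by rw [smul_neg, hn, neg_zero]⟩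

def IsDigits (p : ℕ) (c : T →₀ ℤ) : Prop :=
  (∀ z, 0 ≤ c z ∧ c z < p) ∧ ∀ z : T, z.1 = [] → c z = 0

lemma isDigits_zero (hp : p ≠ 0) : IsDigits p (0 : T →₀ ℤ) :=
  ⟨fun _ => ⟨le_rfl, by simp [Nat.pos_of_ne_zero hp]⟩, fun _ _ => rfl⟩

lemma IsDigits.update {c : T →₀ ℤ} (hc : IsDigits p c) {z : T} (hz : z.1 ≠ []) {a : ℤ}
    (ha₀ : 0 ≤ a) (ha : a < p) : IsDigits p (c.update z a) := by
  refine ⟨fun y => ?_, fun y hy => ?_⟩ <;> rw [update_apply] <;> split_ifs with hyz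
  · exact ⟨ha₀, ha⟩
  · exact hc.1 y
  · exact absurd (hyz ▸ hy) hz
  · exact hc.2 y hy

def coordWeight (p : ℕ) (x z : T) : ℚ :=
  if x.1 <+: z.1 then (p : ℚ) ^ ((x.1.length : ℤ) - z.1.length - 1) else 0

lemma nsmul_coordWeight (hp : p ≠ 0) {x z w : T} (hz : z.1 ≠ [])
    (hw : w.1 = z.1.dropLast) :
    p • (coordWeight p x z : ℚ ⧸ AddSubgroup.zmultiples (1 : ℚ)) = coordWeight p x w := by
  rw [← QuotientAddGroup.mk_nsmul, QuotientAddGroup.eq_iff_sub_mem]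
  rw [show p • coordWeight p x z = (p : ℚ) * coordWeight p x z from nsmul_eq_mul _ _]
  by_cases hxw : x.1 <+: w.1
  · have hxz : x.1 <+: z.1 := hxw.trans (hw ▸ z.1.dropLast_prefix)
    have hlen : (w.1.length : ℤ) = z.1.length - 1 := by
      have := List.length_pos_iff.mpr hz
      rw [hw, List.length_dropLast]
      omega
    rw [coordWeight, coordWeight, if_pos hxw, if_pos hxz, hlen,
      show (x.1.length : ℤ) - (z.1.length - 1) - 1 = x.1.length - z.1.length - 1 + 1 by ring,
      zpow_add_one₀ (by exact_mod_cast hp), mul_comm, _root_.sub_self]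
    exact zero_mem _
  by_cases hxz : x.1 <+: z.1
  · have hxz' : x.1 = z.1 := by
      by_contra hne
      exact hxw (hw ▸ hxz.prefix_dropLast hne)
    rw [coordWeight, coordWeight, if_neg hxw, if_pos hxz, hxz', _root_.sub_self, _root_.zero_sub,
      zpow_neg_one, mul_inv_cancel₀ (by exact_mod_cast hp)]
    simp
  · simp [coordWeight, hxw, hxz]

def coordinate (hp : p ≠ 0) {x : T} (hx : x.1 ≠ []) :
    treeGroup p T →+ ℚ ⧸ AddSubgroup.zmultiples (1 : ℚ) :=
  lift (fun z => (coordWeight p x z : ℚ ⧸ AddSubgroup.zmultiples (1 : ℚ)))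
    (fun z hz => by simp [coordWeight, hz, List.prefix_nil, hx])
    (fun _ _ hz hw => nsmul_coordWeight hp hz hw)

lemma coordinate_linearCombination (hp : p ≠ 0) {x : T} (hx : x.1 ≠ []) (e : T →₀ ℤ) :
    coordinate hp hx (linearCombination ℤ (of p) e) =
      (linearCombination ℤ (coordWeight p x) e : ℚ ⧸ AddSubgroup.zmultiples (1 : ℚ)) := by
  induction e using Finsupp.induction_linear with
  | zero => simp
  | add e₁ e₂ h₁ h₂ => simp [h₁, h₂]
  | single z a => simp [coordinate]

theorem IsDigits.eq_of_linearCombination_eq (hp : p ≠ 0) {c d : T →₀ ℤ} (hc : IsDigits p c)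
    (hd : IsDigits p d) (h : linearCombination ℤ (of p) c = linearCombination ℤ (of p) d) :
    c = d := by
  by_contra hne
  obtain ⟨x, hx, hmax⟩ := (c - d).support.exists_max_image (fun z => z.1.length)
    (support_nonempty_iff.mpr (sub_ne_zero.mpr hne))
  rw [mem_support_iff] at hx
  have hxroot : x.1 ≠ [] := fun h0 => hx (by simp [hc.2 x h0, hd.2 x h0])
  -- only `x` itself contributes, by maximality of its length
  have hval : linearCombination ℤ (coordWeight p x) (c - d) = (c - d) x * (p : ℚ)⁻¹ := by
    rw [linearCombination_apply, sum_eq_single x]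
    · simp [coordWeight, zsmul_eq_mul]
    · intro z hz hzx
      have : ¬ x.1 <+: z.1 := fun hxz => hzx <| Subtype.ext <|
        (hxz.eq_of_length (hxz.length_le.antisymm (hmax z (mem_support_iff.mpr hz)))).symm
      simp [coordWeight, this]
    · simp
  obtain ⟨k, hk⟩ : ∃ k : ℤ, (k : ℚ) = (c - d) x * (p : ℚ)⁻¹ := by
    have := congrArg (coordinate hp hxroot) (sub_eq_zero.mpr h)
    rw [← map_sub, coordinate_linearCombination, map_zero, hval, QuotientAddGroup.eq_zero_iff,
      AddSubgroup.mem_zmultiples_iff] at this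
    simpa using this
  have hdvd : (p : ℤ) ∣ (c - d) x := ⟨k, by
    have : ((c - d) x : ℚ) = p * k := by rw [hk]; field_simp
    exact_mod_cast this⟩
  have habs : |(c - d) x| < p := by
    have := hc.1 x
    have := hd.1 x
    rw [Finsupp.sub_apply, abs_lt]
    omega
  exact hx (Int.eq_zero_of_abs_lt_dvd hdvd habs)

theorem of_ne_zero (hp : 1 < p) {x : T} (hx : x.1 ≠ []) : of p x ≠ 0 := by
  intro h0
  have hx₁ : IsDigits p (single x 1) := by
    refine ⟨fun z => ?_, fun z hz => ?_⟩
    · rw [single_apply]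
      split_ifs <;> omega
    · rw [single_apply, if_neg (by rintro rfl; exact hx hz)]
  have := hx₁.eq_of_linearCombination_eq (by omega) (isDigits_zero (by omega)) (by simpa using h0)
  simp at this

section Carry

variable (hT : IsPrefixClosed T) {A : Set T} (hA : ∀ x ∈ A, parent hT x ∈ A)
include hA

lemma exists_digits_of_add {z : T} (hz : z ∈ A) {c : T →₀ ℤ} (hcA : c ∈ supported ℤ ℤ A)
    (hc : IsDigits p c) :
    ∃ d ∈ supported ℤ ℤ A, IsDigits p d ∧
      linearCombination ℤ (of p) d = of p z + linearCombination ℤ (of p) c := by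
  obtain ⟨n, hn⟩ : ∃ n, z.1.length = n := ⟨_, rfl⟩
  induction n generalizing z c with
  | zero => exact ⟨c, hcA, hc, by rw [of_eq_zero (List.length_eq_zero_iff.mp hn), zero_add]⟩
  | succ n ih =>
    have hzroot : z.1 ≠ [] := by rintro h; simp [h] at hn
    have hcz := hc.1 z
    by_cases hlt : c z + 1 < p
    · refine ⟨c.update z (c z + 1), update_mem_supported hcA hz _,
        hc.update hzroot (by omega) hlt, ?_⟩
      have := linearCombination_update_add ℤ (of p) c z (c z + 1)
      rw [add_smul, one_smul] at this
      exact add_right_cancel (this.trans (by abel))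
    -- the digit at `z` overflows: carry `p • of p z = of p (parent hT z)`
    · obtain ⟨d, hdA, hd, hdval⟩ := ih (hA z hz) (update_mem_supported hcA hz 0)
        (hc.update hzroot le_rfl (by omega)) (by simp [parent, hn])
      refine ⟨d, hdA, hd, ?_⟩
      have hcarry : (c z + 1) • of p z = of p (parent hT z) := by
        rw [show c z + 1 = (p : ℤ) by omega, natCast_zsmul, nsmul_of (w := parent hT z) rfl]
      have := linearCombination_update_add ℤ (of p) c z 0
      rw [zero_smul, add_zero] at this
      rw [hdval, ← hcarry, ← this, add_smul, one_smul]
      abel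

lemma exists_digits_nsmul_add {z : T} (hz : z ∈ A) {c : T →₀ ℤ} (hcA : c ∈ supported ℤ ℤ A)
    (hc : IsDigits p c) (m : ℕ) :
    ∃ d ∈ supported ℤ ℤ A, IsDigits p d ∧
      linearCombination ℤ (of p) d = m • of p z + linearCombination ℤ (of p) c := by
  induction m with
  | zero => exact ⟨c, hcA, hc, by rw [zero_smul, zero_add]⟩
  | succ m ih =>
    obtain ⟨d, hdA, hd, hdval⟩ := ih
    obtain ⟨e, heA, he, heval⟩ := exists_digits_of_add hT hA hz hdA hd
    exact ⟨e, heA, he, by rw [heval, hdval, succ_nsmul]; abel⟩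

theorem exists_digits (hp : p ≠ 0) {g : treeGroup p T}
    (hg : g ∈ AddSubgroup.closure (of p '' A)) :
    ∃ c ∈ supported ℤ ℤ A, IsDigits p c ∧ linearCombination ℤ (of p) c = g := by
  induction hg using AddSubgroup.closure_induction_left with
  | zero => exact ⟨0, zero_mem _, isDigits_zero hp, map_zero _⟩
  | add_left _ hx _ _ ih =>
    obtain ⟨z, hz, rfl⟩ := hx
    obtain ⟨c, hcA, hc, rfl⟩ := ih
    simpa using exists_digits_nsmul_add hT hA hz hcA hc 1
  | neg_add_cancel _ hx _ _ ih =>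
    obtain ⟨z, hz, rfl⟩ := hx
    obtain ⟨c, hcA, hc, rfl⟩ := ih
    -- `p`-torsion turns negation into a natural multiple
    have hneg : -of p z = (p ^ z.1.length - 1) • of p z := by
      refine neg_eq_of_add_eq_zero_left ?_
      rw [← succ_nsmul, Nat.sub_add_cancel (Nat.one_le_pow _ _ (Nat.pos_of_ne_zero hp)),
        pow_length_nsmul_of hT]
    rw [hneg]
    exact exists_digits_nsmul_add hT hA hz hcA hc _

end Carry

theorem mem_closure_iInter (hp : p ≠ 0) (hT : IsPrefixClosed T) {ι : Sort*} {A : ι → Set T}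
    (hA : ∀ i, ∀ x ∈ A i, parent hT x ∈ A i) {g : treeGroup p T}
    (hg : ∀ i, g ∈ AddSubgroup.closure (of p '' A i)) :
    g ∈ AddSubgroup.closure (of p '' ⋂ i, A i) := by
  obtain ⟨c, -, hc, rfl⟩ := exists_digits hT (A := Set.univ) (fun _ _ => trivial) hp
    (g := g) (by rw [Set.image_univ]; exact mem_closure_range_of g)
  have hcA : ∀ i, c ∈ supported ℤ ℤ (A i) := fun i => by
    obtain ⟨d, hdA, hd, hdc⟩ := exists_digits hT (hA i) hp (hg i)
    rwa [← hd.eq_of_linearCombination_eq hp hc hdc]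
  have hcA' : c ∈ supported ℤ ℤ (⋂ i, A i) :=
    (mem_supported ℤ c).mpr (Set.subset_iInter fun i => (mem_supported ℤ c).mp (hcA i))
  have := (mem_span_image_iff_linearCombination ℤ (v := of p)).mpr ⟨c, hcA', rfl⟩
  rwa [← AddSubgroup.toIntSubmodule_closure] at this

theorem not_isReducedPGroup_of_path (hp : 1 < p) {f : ℕ → ℕ}
    (hf : ∀ n, (List.range n).map f ∈ T) : ¬ IsReducedPGroup p (treeGroup p T) := by
  intro hred
  let node : ℕ → T := fun n => ⟨_, hf n⟩
  have hdiv : ∀ g ∈ Set.range (of p ∘ node), ∃ h ∈ Set.range (of p ∘ node), p • h = g := by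
    rintro _ ⟨n, rfl⟩
    exact ⟨_, ⟨n + 1, rfl⟩, nsmul_of (by simp [node, List.range_succ])⟩
  exact of_ne_zero hp (x := node 1) (by simp [node])
    (hred.eq_zero_of_forall_mem_exists_nsmul_eq hdiv ⟨1, rfl⟩)

section Rank

variable [IsWellFounded T (IsChild T)]

local notation "rank" => IsWellFounded.rank (IsChild T)

lemma rank_le_rank_parent (hT : IsPrefixClosed T) (x : T) : rank x ≤ rank (parent hT x) := by
  by_cases hx : x.1 = []
  · rw [show parent hT x = x from Subtype.ext (by simp [parent, hx])]
  · exact (IsWellFounded.rank_lt_of_rel ⟨hx, rfl⟩).le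

theorem ulmSub_le_closure_rank (hp : p ≠ 0) (hT : IsPrefixClosed T) (β : Ordinal.{0}) :
    ulmSub p (treeGroup p T) β ≤ AddSubgroup.closure (of p '' {x | β ≤ rank x}) := by
  induction β using Ordinal.limitRecOn with
  | zero => intro g _; simpa using mem_closure_range_of g
  | add_one β ih =>
    rw [ulmSub_succ]
    refine (AddSubgroup.map_mono ih).trans ?_
    rw [AddMonoidHom.map_closure, AddSubgroup.closure_le]
    rintro _ ⟨_, ⟨x, hx, rfl⟩, rfl⟩
    rw [SetLike.mem_coe, pHom_apply, nsmul_of (w := parent hT x) rfl]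
    by_cases hxr : x.1 = []
    · rw [of_eq_zero (by simp [parent, hxr])]
      exact zero_mem _
    · exact AddSubgroup.subset_closure
        ⟨_, Order.add_one_le_of_lt (hx.trans_lt (IsWellFounded.rank_lt_of_rel ⟨hxr, rfl⟩)), rfl⟩
  | limit β hβ ih =>
    rw [ulmSub_limit hβ]
    intro g hg
    have := mem_closure_iInter hp hT (A := fun γ : Set.Iio β => {x | γ.1 ≤ rank x})
      (fun γ x hx => hx.trans (rank_le_rank_parent hT x))
      (fun γ => ih γ.1 γ.2 (AddSubgroup.mem_iInf.mp (AddSubgroup.mem_iInf.mp hg γ.1) γ.2))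
    refine AddSubgroup.closure_mono (Set.image_mono fun x hx => ?_) this
    by_contra hlt
    have := Set.mem_iInter.mp hx ⟨_, hβ.succ_lt (not_le.mp hlt)⟩
    exact (Order.lt_succ (rank x)).not_ge this

theorem isReducedPGroup (hp : p ≠ 0) (hT : IsPrefixClosed T) :
    IsReducedPGroup p (treeGroup p T) := by
  set β := ⨆ x : T, Order.succ (rank x)
  refine isReducedPGroup_of_ulmSub_eq_bot (β := β) <| le_bot_iff.mp <|
    (ulmSub_le_closure_rank hp hT β).trans <| (AddSubgroup.closure_le _).mpr ?_
  rintro _ ⟨x, hx, rfl⟩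
  exact absurd (show β ≤ rank x from hx)
    ((Order.lt_succ _).trans_le (le_ciSup Ordinal.bddAbove_of_small x)).not_ge

end Rank

end treeGroup

theorem treeGroup_pGroup_and_reduced_iff_general (p : ℕ) (hp : p.Prime) (T : Set (List ℕ))
    (hclosed : ∀ l ∈ T, ∀ l' : List ℕ, l' <+: l → l' ∈ T) :
    IsAbelianPGroup p (treeGroup p T) ∧
      (IsReducedPGroup p (treeGroup p T) ↔
        ¬ ∃ f : ℕ → ℕ, ∀ n : ℕ, (List.range n).map f ∈ T) := by
  refine ⟨treeGroup.isAbelianPGroup hclosed,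
    fun hred ⟨_, hf⟩ => treeGroup.not_isReducedPGroup_of_path hp.one_lt hf hred, fun hnp => ?_⟩
  have : IsWellFounded T (IsChild T) := ⟨wellFounded_isChild hclosed hnp⟩
  exact treeGroup.isReducedPGroup hp.ne_zero hclosed

/-- For a tree `T`, `G(T)` is an abelian `p`-group, and it is reduced iff `T` has no infinite
path. -/
theorem treeGroup_pGroup_and_reduced_iff (p : ℕ) (hp : p.Prime) (T : Set (List ℕ))
    (hroot : ([] : List ℕ) ∈ T)
    (hclosed : ∀ l ∈ T, ∀ l' : List ℕ, l' <+: l → l' ∈ T) :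
    IsAbelianPGroup p (treeGroup p T) ∧
      (IsReducedPGroup p (treeGroup p T) ↔
        ¬ ∃ f : ℕ → ℕ, ∀ n : ℕ, (List.range n).map f ∈ T) :=
  treeGroup_pGroup_and_reduced_iff_general p hp T hclosed
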